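/- Let H be a complex Hilbert space, let δ > 0, let T be a bounded self-adjoint linear operator on H, and let S be a bounded linear operator on H with Im ⟪f, S f⟫ ≥ δ · ‖f‖² for all f ∈ H. Set A := T + S. Then there exists a bounded linear operator B on H such that B² = A, σ(B) is contained in the closed first quadrant {λ : Re λ ≥ 0 and Im λ ≥ 0}, and for every real x ≥ 0 one has ‖exp(x • (Complex.I • B))‖ ≤ 1. -/

import Mathlib

/-!
After the rotation `A' = -i A`, the hypotheses say that `A'` is strictly accretive, so for a
suitable `t > 0` we have `t A' = 1 + K` with `‖K‖ < 1`. The binomial series of `√(1 + x)`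
converges absolutely on the closed unit disc and yields `C` with `C² = 1 + K` and
`‖C - 1‖ ≤ ‖K‖`; then `B = (2t)^(-1/2) (1 + i) C` satisfies `B² = A`.

Write `C = R + i J` with `R, J` self-adjoint. Since `Re C ≥ 0` and `Re C² = R² - J² ≥ 0`,
operator monotonicity of the square root gives `|J| ≤ R`, so the numerical range of `C` lies in
the sector `|Im z| ≤ Re z`; the spectrum of `C` lies there as well, because `‖C - 1‖ < 1` and
`‖C² - 1‖ < 1`. Multiplication by `1 + i` maps this sector into the first quadrant, which gives
the spectral condition and shows that `i B` is dissipative, hence generates a contraction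
semigroup.
-/

open Finset NormedSpace ComplexStarModule

theorem Ring.choose_succ_eq_mul_div {K : Type*} [Field K] [CharZero K] (a : K) (n : ℕ) :
    Ring.choose a (n + 1) = Ring.choose a n * (a - n) / (n + 1) := by
  simp only [Ring.choose_eq_smul, descPochhammer_succ_right, Polynomial.smeval_mul,
    Polynomial.smeval_sub, Polynomial.smeval_X, Polynomial.smeval_natCast, pow_one, pow_zero,
    nsmul_eq_mul, mul_one, smul_eq_mul, Nat.factorial_succ, Nat.cast_mul, Nat.cast_succ]
  field_simp

lemma abs_choose_half_succ_succ (n : ℕ) :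
    |Ring.choose (1/2 : ℝ) (n + 2)| = |Ring.choose (1/2 : ℝ) (n + 1)| * (n + 1/2) / (n + 2) := by
  have hn : (1/2 : ℝ) - ↑(n + 1) < 0 := by push_cast; linarith [n.cast_nonneg (α := ℝ)]
  rw [Ring.choose_succ_eq_mul_div, abs_div, abs_mul, abs_of_neg hn,
    abs_of_pos (by positivity : (0 : ℝ) < ↑(n + 1) + 1)]
  push_cast
  ring

lemma sum_range_abs_choose_half_succ (N : ℕ) :
    ∑ n ∈ range N, |Ring.choose (1/2 : ℝ) (n + 1)|
      = 1 - 2 * (N + 1) * |Ring.choose (1/2 : ℝ) (N + 1)| := by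
  induction N with
  | zero => norm_num
  | succ N ih =>
    rw [sum_range_succ, ih, abs_choose_half_succ_succ]
    push_cast
    field_simp
    ring

lemma sum_range_abs_choose_half_succ_le_one (N : ℕ) :
    ∑ n ∈ range N, |Ring.choose (1/2 : ℝ) (n + 1)| ≤ 1 := by
  rw [sum_range_abs_choose_half_succ]
  linarith [show 0 ≤ 2 * ((N : ℝ) + 1) * |Ring.choose (1/2 : ℝ) (N + 1)| by positivity]

lemma summable_abs_choose_half_succ : Summable fun n ↦ |Ring.choose (1/2 : ℝ) (n + 1)| :=
  summable_of_sum_range_le (fun _ ↦ abs_nonneg _) sum_range_abs_choose_half_succ_le_one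

lemma tsum_abs_choose_half_succ_le_one : ∑' n, |Ring.choose (1/2 : ℝ) (n + 1)| ≤ 1 :=
  summable_abs_choose_half_succ.tsum_le_of_sum_range_le sum_range_abs_choose_half_succ_le_one

lemma sum_antidiagonal_choose_half_mul (n : ℕ) :
    ∑ ij ∈ antidiagonal n, Ring.choose (1/2 : ℝ) ij.1 * Ring.choose (1/2 : ℝ) ij.2
      = Nat.choose 1 n := by
  rw [← Ring.add_choose_eq n (Commute.all _ _), ← Ring.choose_natCast]
  norm_num

section SqrtOneAdd

variable {𝔸 : Type*} [NormedRing 𝔸] [NormedAlgebra ℝ 𝔸] {K : 𝔸}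

lemma norm_choose_half_smul_pow_succ_le (hK : ‖K‖ ≤ 1) (n : ℕ) :
    ‖Ring.choose (1/2 : ℝ) (n + 1) • K ^ (n + 1)‖ ≤ |Ring.choose (1/2 : ℝ) (n + 1)| * ‖K‖ := by
  rw [norm_smul, Real.norm_eq_abs]
  gcongr
  calc ‖K ^ (n + 1)‖ ≤ ‖K‖ ^ (n + 1) := norm_pow_le' K n.succ_pos
    _ ≤ ‖K‖ := pow_le_of_le_one (norm_nonneg K) hK n.succ_ne_zero

lemma summable_norm_choose_half_smul_pow (hK : ‖K‖ ≤ 1) :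
    Summable fun n ↦ ‖Ring.choose (1/2 : ℝ) n • K ^ n‖ :=
  (summable_nat_add_iff 1).mp <| .of_nonneg_of_le (fun _ ↦ norm_nonneg _)
    (norm_choose_half_smul_pow_succ_le hK) (summable_abs_choose_half_succ.mul_right _)

variable [CompleteSpace 𝔸]

noncomputable def sqrtOneAdd (K : 𝔸) : 𝔸 := ∑' n, Ring.choose (1/2 : ℝ) n • K ^ n

lemma norm_sqrtOneAdd_sub_one_le (hK : ‖K‖ ≤ 1) : ‖sqrtOneAdd K - 1‖ ≤ ‖K‖ := by
  have hsum := summable_norm_choose_half_smul_pow hK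
  have htail := (summable_nat_add_iff 1).mpr hsum
  rw [sqrtOneAdd, hsum.of_norm.tsum_eq_zero_add]
  simp only [Ring.choose_zero_right, pow_zero, one_smul, add_sub_cancel_left]
  calc ‖∑' n, Ring.choose (1/2 : ℝ) (n + 1) • K ^ (n + 1)‖
      ≤ ∑' n, |Ring.choose (1/2 : ℝ) (n + 1)| * ‖K‖ :=
        (norm_tsum_le_tsum_norm htail).trans <| htail.tsum_le_tsum
          (norm_choose_half_smul_pow_succ_le hK) (summable_abs_choose_half_succ.mul_right _)
    _ ≤ 1 * ‖K‖ := by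
        rw [tsum_mul_right]
        gcongr
        exact tsum_abs_choose_half_succ_le_one
    _ = ‖K‖ := one_mul _

lemma sqrtOneAdd_mul_self (hK : ‖K‖ ≤ 1) : sqrtOneAdd K * sqrtOneAdd K = 1 + K := by
  have hsum := summable_norm_choose_half_smul_pow hK
  rw [sqrtOneAdd, tsum_mul_tsum_eq_tsum_sum_antidiagonal_of_summable_norm hsum hsum]
  have hcoeff (n : ℕ) : ∑ ij ∈ antidiagonal n,
      Ring.choose (1/2 : ℝ) ij.1 • K ^ ij.1 * Ring.choose (1/2 : ℝ) ij.2 • K ^ ij.2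
        = (Nat.choose 1 n : ℝ) • K ^ n := by
    rw [← sum_antidiagonal_choose_half_mul, sum_smul]
    refine sum_congr rfl fun ij hij ↦ ?_
    rw [smul_mul_smul_comm, ← pow_add, mem_antidiagonal.mp hij]
  simp_rw [hcoeff]
  rw [tsum_eq_sum (s := range 2) fun n hn ↦ by
    rw [Nat.choose_eq_zero_of_lt (by simpa using hn)]; simp]
  simp [sum_range_succ]

end SqrtOneAdd

section Spectrum

variable {𝔸 : Type*} [NormedRing 𝔸] [NormedAlgebra ℂ 𝔸] [CompleteSpace 𝔸] [NormOneClass 𝔸]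

lemma re_pos_of_mem_spectrum_of_norm_sub_one_lt_one {a : 𝔸} (ha : ‖a - 1‖ < 1) {z : ℂ}
    (hz : z ∈ spectrum ℂ a) : 0 < z.re := by
  have hz1 : z - 1 ∈ spectrum ℂ (a - 1) := by
    rw [← map_one (algebraMap ℂ 𝔸), ← spectrum.sub_singleton_eq]
    exact Set.sub_mem_sub hz rfl
  have := (Complex.abs_re_le_norm _).trans_lt ((spectrum.norm_le_norm_of_mem hz1).trans_lt ha)
  rw [Complex.sub_re, Complex.one_re] at this
  linarith [neg_abs_le (z.re - 1)]

lemma abs_im_lt_re_of_mem_spectrum {c : 𝔸} (hc : ‖c - 1‖ < 1) (hc2 : ‖c ^ 2 - 1‖ < 1)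
    {w : ℂ} (hw : w ∈ spectrum ℂ c) : |w.im| < w.re := by
  have hre := re_pos_of_mem_spectrum_of_norm_sub_one_lt_one hc hw
  have hre2 := re_pos_of_mem_spectrum_of_norm_sub_one_lt_one hc2 (spectrum.pow_mem_pow c 2 hw)
  rw [sq, Complex.mul_re] at hre2
  exact abs_lt_of_sq_lt_sq (by nlinarith) hre.le

end Spectrum

lemma le_and_neg_le_of_mul_self_le {A : Type*} [CStarAlgebra A] [PartialOrder A]
    [StarOrderedRing A] {r j : A} (hr : 0 ≤ r) (hj : IsSelfAdjoint j) (h : j * j ≤ r * r) :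
    j ≤ r ∧ -j ≤ r := by
  have habs : CFC.abs j ≤ r := by
    rw [CFC.abs, hj.star_eq, ← CFC.sqrt_mul_self r hr]
    exact CFC.sqrt_le_sqrt _ _ h
  refine ⟨le_trans ?_ habs, le_trans ?_ habs⟩
  · rw [← sub_nonneg, CFC.abs_sub_self j hj]
    exact smul_nonneg zero_le_two (CFC.negPart_nonneg j)
  · rw [← sub_nonneg, sub_neg_eq_add, CFC.abs_add_self j hj]
    exact smul_nonneg zero_le_two (CFC.posPart_nonneg j)

lemma re_nonneg_and_im_nonneg_of_abs_im_le_re {s : ℝ} (hs : 0 ≤ s) {w : ℂ}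
    (hw : |w.im| ≤ w.re) :
    0 ≤ (s * (1 + Complex.I) * w).re ∧ 0 ≤ (s * (1 + Complex.I) * w).im := by
  obtain ⟨h1, h2⟩ := abs_le.1 hw
  simp only [Complex.mul_re, Complex.mul_im, Complex.add_re, Complex.add_im, Complex.ofReal_re,
    Complex.ofReal_im, Complex.one_re, Complex.one_im, Complex.I_re, Complex.I_im]
  constructor <;> nlinarith

lemma inv_sqrt_two_mul_mul_one_add_I_sq {t : ℝ} (ht : 0 < t) :
    ((√(2 * t))⁻¹ * (1 + Complex.I) : ℂ) ^ 2 = Complex.I / t := by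
  have hsq : ((√(2 * t) : ℝ) : ℂ) ^ 2 = 2 * t := by
    rw [← Complex.ofReal_pow, Real.sq_sqrt (by positivity)]
    push_cast
    ring
  have ht' : (t : ℂ) ≠ 0 := by exact_mod_cast ht.ne'
  rw [mul_pow, Complex.ofReal_inv, inv_pow, hsq]
  field_simp
  linear_combination Complex.I_sq

lemma re_nonneg_and_im_nonneg_of_mem_spectrum_smul {𝔸 : Type*} [Ring 𝔸] [Algebra ℂ 𝔸] {c : 𝔸}
    {s : ℝ} (hs : 0 < s) (hc : ∀ w ∈ spectrum ℂ c, |w.im| ≤ w.re) {z : ℂ}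
    (hz : z ∈ spectrum ℂ ((s * (1 + Complex.I) : ℂ) • c)) : 0 ≤ z.re ∧ 0 ≤ z.im := by
  have hμ : (s * (1 + Complex.I) : ℂ) ≠ 0 :=
    mul_ne_zero (by exact_mod_cast hs.ne') (by simp [Complex.ext_iff])
  rw [show (s * (1 + Complex.I) : ℂ) • c = Units.mk0 _ hμ • c from rfl,
    spectrum.unit_smul_eq_smul] at hz
  obtain ⟨w, hw, rfl⟩ := hz
  exact re_nonneg_and_im_nonneg_of_abs_im_le_re hs.le (hc w hw)

section Hilbert

variable {H : Type*} [NormedAddCommGroup H] [InnerProductSpace ℂ H]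

lemma re_inner_apply_le_of_le {a b : H →L[ℂ] H} (hab : a ≤ b) (f : H) :
    (inner ℂ f (a f)).re ≤ (inner ℂ f (b f)).re := by
  have := ((ContinuousLinearMap.le_def a b).1 hab).re_inner_nonneg_right f
  simpa [inner_sub_right] using this

lemma re_inner_apply_nonneg_of_norm_sub_one_le_one {E : H →L[ℂ] H} (hE : ‖E - 1‖ ≤ 1)
    (f : H) : 0 ≤ (inner ℂ f (E f)).re := by
  have hbound : |(inner ℂ f ((E - 1) f)).re| ≤ ‖f‖ ^ 2 := calc
    |(inner ℂ f ((E - 1) f)).re| ≤ ‖f‖ * ‖(E - 1) f‖ :=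
      (Complex.abs_re_le_norm _).trans (norm_inner_le_norm _ _)
    _ ≤ ‖f‖ * (1 * ‖f‖) := by gcongr; exact (E - 1).le_of_opNorm_le hE f
    _ = ‖f‖ ^ 2 := by ring
  have hsplit : (inner ℂ f (E f)).re = ‖f‖ ^ 2 + (inner ℂ f ((E - 1) f)).re := by
    have hself := inner_self_eq_norm_sq (𝕜 := ℂ) f
    rw [RCLike.re_to_complex] at hself
    simp only [sub_apply, one_apply_eq_self, inner_sub_right, Complex.sub_re, hself]
    ring
  linarith [neg_abs_le (inner ℂ f ((E - 1) f)).re]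

lemma norm_smul_sub_one_le_sqrt {M : H →L[ℂ] H} {δ t : ℝ}
    (hM : ∀ f, δ * ‖f‖ ^ 2 ≤ (inner ℂ f (M f)).re) (ht : 0 ≤ t) (htM : t * ‖M‖ ^ 2 ≤ δ) :
    ‖(t : ℂ) • M - 1‖ ≤ √(1 - t * δ) := by
  refine ContinuousLinearMap.opNorm_le_bound _ (Real.sqrt_nonneg _) fun f ↦ ?_
  have hsq : ‖((t : ℂ) • M - 1) f‖ ^ 2 ≤ (1 - t * δ) * ‖f‖ ^ 2 := by
    simp only [sub_apply, smul_apply, one_apply_eq_self]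
    rw [@norm_sub_sq ℂ, norm_smul, Complex.norm_real, Real.norm_of_nonneg ht, inner_smul_left,
      Complex.conj_ofReal, RCLike.re_to_complex, Complex.re_ofReal_mul, ← inner_conj_symm,
      Complex.conj_re]
    have hMf : (t * ‖M f‖) ^ 2 ≤ t * δ * ‖f‖ ^ 2 := calc
      (t * ‖M f‖) ^ 2 ≤ t * (t * ‖M‖ ^ 2) * ‖f‖ ^ 2 := by
        rw [mul_pow]
        nlinarith [pow_le_pow_left₀ (norm_nonneg _) (M.le_opNorm f) 2]
      _ ≤ t * δ * ‖f‖ ^ 2 := by gcongr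
    nlinarith [hM f]
  calc ‖((t : ℂ) • M - 1) f‖ = √(‖((t : ℂ) • M - 1) f‖ ^ 2) :=
        (Real.sqrt_sq (norm_nonneg _)).symm
    _ ≤ √((1 - t * δ) * ‖f‖ ^ 2) := Real.sqrt_le_sqrt hsq
    _ = √(1 - t * δ) * ‖f‖ := by rw [Real.sqrt_mul' _ (sq_nonneg _), Real.sqrt_sq (norm_nonneg _)]

lemma exists_pos_norm_smul_sub_one_lt_one {M : H →L[ℂ] H} {δ : ℝ} (hδ : 0 < δ)
    (hM : ∀ f, δ * ‖f‖ ^ 2 ≤ (inner ℂ f (M f)).re) :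
    ∃ t : ℝ, 0 < t ∧ ‖(t : ℂ) • M - 1‖ < 1 := by
  set t := δ / (δ ^ 2 + ‖M‖ ^ 2)
  have ht : 0 < t := by positivity
  refine ⟨t, ht, (norm_smul_sub_one_le_sqrt hM ht.le ?_).trans_lt ?_⟩
  · rw [div_mul_eq_mul_div, div_le_iff₀ (by positivity)]
    nlinarith
  · rw [Real.sqrt_lt' one_pos]
    nlinarith

variable [CompleteSpace H]

lemma nonneg_of_re_inner_apply_nonneg {a : H →L[ℂ] H} (ha : IsSelfAdjoint a)
    (h : ∀ f, 0 ≤ (inner ℂ f (a f)).re) : 0 ≤ a := by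
  refine (ContinuousLinearMap.nonneg_iff_isPositive a).2
    (ContinuousLinearMap.isPositive_def'.2 ⟨ha, fun f ↦ ?_⟩)
  rw [ContinuousLinearMap.reApplyInnerSelf, inner_re_symm]
  exact h f

lemma im_inner_apply_self_eq_zero {a : H →L[ℂ] H} (ha : IsSelfAdjoint a) (f : H) :
    (inner ℂ f (a f)).im = 0 := by
  rw [← Complex.conj_eq_iff_im, inner_conj_symm]
  exact ha.isSymmetric f f

lemma re_inner_add_I_smul_apply (a : H →L[ℂ] H) {b : H →L[ℂ] H} (hb : IsSelfAdjoint b)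
    (f : H) : (inner ℂ f ((a + Complex.I • b) f)).re = (inner ℂ f (a f)).re := by
  simp [im_inner_apply_self_eq_zero hb]

lemma im_inner_add_I_smul_apply {a : H →L[ℂ] H} (ha : IsSelfAdjoint a) (b : H →L[ℂ] H)
    (f : H) : (inner ℂ f ((a + Complex.I • b) f)).im = (inner ℂ f (b f)).re := by
  simp [im_inner_apply_self_eq_zero ha]

lemma abs_im_inner_le_re_inner {c : H →L[ℂ] H} (hc : ∀ f, 0 ≤ (inner ℂ f (c f)).re)
    (hc2 : ∀ f, 0 ≤ (inner ℂ f ((c * c) f)).re) (f : H) :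
    |(inner ℂ f (c f)).im| ≤ (inner ℂ f (c f)).re := by
  set r : H →L[ℂ] H := (ℜ c : H →L[ℂ] H)
  set j : H →L[ℂ] H := (ℑ c : H →L[ℂ] H)
  have hr : IsSelfAdjoint r := (ℜ c).2
  have hj : IsSelfAdjoint j := (ℑ c).2
  have hc_eq : c = r + Complex.I • j := (realPart_add_I_smul_imaginaryPart c).symm
  have hc2_eq : c * c = (r * r - j * j) + Complex.I • (r * j + j * r) := by
    rw [hc_eq]
    simp only [add_mul, mul_add, smul_mul_assoc, mul_smul_comm, smul_add, smul_smul,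
      Complex.I_mul_I, neg_one_smul]
    abel
  have hr_nonneg : 0 ≤ r := nonneg_of_re_inner_apply_nonneg hr fun f ↦ by
    rw [← re_inner_add_I_smul_apply r hj, ← hc_eq]
    exact hc f
  have hsa : IsSelfAdjoint (r * r - j * j) := by simp [IsSelfAdjoint, hr.star_eq, hj.star_eq]
  have hsa' : IsSelfAdjoint (r * j + j * r) := by
    simp [IsSelfAdjoint, hr.star_eq, hj.star_eq, add_comm]
  have hsq : j * j ≤ r * r := sub_nonneg.1 <| nonneg_of_re_inner_apply_nonneg hsa fun f ↦ by
    rw [← re_inner_add_I_smul_apply _ hsa' f, ← hc2_eq]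
    exact hc2 f
  obtain ⟨hjr, hjr'⟩ := le_and_neg_le_of_mul_self_le hr_nonneg hj hsq
  rw [hc_eq, re_inner_add_I_smul_apply r hj f, im_inner_add_I_smul_apply hr j f, abs_le]
  constructor
  · have := re_inner_apply_le_of_le hjr' f
    simp only [neg_apply, inner_neg_right, Complex.neg_re] at this
    linarith
  · exact re_inner_apply_le_of_le hjr f

lemma hasDerivAt_exp_smul_apply (M : H →L[ℂ] H) (f : H) (s : ℝ) :
    HasDerivAt (fun s : ℝ ↦ exp (s • M) f) (M (exp (s • M) f)) s := by
  simpa [Function.comp_def] using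
    ((ContinuousLinearMap.apply ℂ H f).restrictScalars ℝ).hasFDerivAt.comp_hasDerivAt s
      (hasDerivAt_exp_smul_const' M s)

lemma hasDerivAt_norm_exp_smul_apply_sq (M : H →L[ℂ] H) (f : H) (s : ℝ) :
    HasDerivAt (fun s : ℝ ↦ ‖exp (s • M) f‖ ^ 2)
      (2 * (inner ℂ (exp (s • M) f) (M (exp (s • M) f))).re) s := by
  have hu := hasDerivAt_exp_smul_apply M f s
  have := Complex.reCLM.hasFDerivAt.comp_hasDerivAt s (hu.inner ℂ hu)
  simp only [Function.comp_def, Complex.reCLM_apply, ← RCLike.re_to_complex,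
    inner_self_eq_norm_sq] at this
  refine this.congr_deriv ?_
  rw [map_add, inner_re_symm (M _), RCLike.re_to_complex]
  ring

lemma norm_exp_smul_le_of_re_inner_le (M : H →L[ℂ] H) {b : ℝ}
    (hM : ∀ f, (inner ℂ f (M f)).re ≤ b * ‖f‖ ^ 2) {t : ℝ} (ht : 0 ≤ t) :
    ‖exp (t • M)‖ ≤ Real.exp (b * t) := by
  refine ContinuousLinearMap.opNorm_le_bound _ (Real.exp_pos _).le fun f ↦ ?_
  have hu := hasDerivAt_norm_exp_smul_apply_sq M f
  have hgron := le_gronwallBound_of_liminf_deriv_right_le (δ := ‖f‖ ^ 2) (K := 2 * b) (ε := 0)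
    (fun s _ ↦ (hu s).continuousAt.continuousWithinAt)
    (fun s _ r hr ↦ (hu s).hasDerivWithinAt.liminf_right_slope_le hr)
    (by simp) (fun s _ ↦ by linarith [hM (exp (s • M) f)]) t ⟨ht, le_rfl⟩
  have hexp : Real.exp (2 * b * (t - 0)) = Real.exp (b * t) ^ 2 := by
    rw [← Real.exp_nat_mul]
    ring_nf
  rw [gronwallBound_ε0, hexp, ← mul_pow, mul_comm] at hgron
  exact (pow_le_pow_iff_left₀ (norm_nonneg _) (by positivity) two_ne_zero).1 hgron

end Hilbert

/-- Well-posedness of the pseudodifferential parabolic equation (bounded-operator form):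
if `T` is bounded self-adjoint and the numerical range of `S` lies in `{Im λ ≥ δ}` for some
`δ > 0`, then `A := T + S` has a square root `B` with spectrum in the closed first quadrant,
and `x ↦ exp (x • (i • B))` is contractive for `x ≥ 0`. -/
theorem pdpe_well_posed {H : Type*} [NormedAddCommGroup H] [InnerProductSpace ℂ H]
    [CompleteSpace H] (δ : ℝ) (hδ : 0 < δ) (T S : H →L[ℂ] H)
    (hT : ∀ f g : H, (inner ℂ (T f) g : ℂ) = inner ℂ f (T g))
    (hS : ∀ f : H, δ * ‖f‖ ^ 2 ≤ (inner ℂ f (S f) : ℂ).im) :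
    ∃ B : H →L[ℂ] H, B ^ 2 = T + S ∧
      (∀ z ∈ spectrum ℂ B, 0 ≤ z.re ∧ 0 ≤ z.im) ∧
      (∀ x : ℝ, 0 ≤ x → ‖NormedSpace.exp (x • (Complex.I • B))‖ ≤ 1) := by
  have hTsa : IsSelfAdjoint T := ContinuousLinearMap.isSelfAdjoint_iff_isSymmetric.2 hT
  have hA : ∀ f, δ * ‖f‖ ^ 2 ≤ (inner ℂ f ((-Complex.I • (T + S)) f)).re := fun f ↦ by
    simpa [inner_add_right, inner_smul_right, im_inner_apply_self_eq_zero hTsa] using hS f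
  obtain ⟨t, ht, hK⟩ := exists_pos_norm_smul_sub_one_lt_one hδ hA
  set C := sqrtOneAdd ((t : ℂ) • (-Complex.I • (T + S)) - 1)
  have hCC : C * C = (t : ℂ) • (-Complex.I • (T + S)) := by
    rw [sqrtOneAdd_mul_self hK.le, add_sub_cancel]
  have hC1 : ‖C - 1‖ < 1 := (norm_sqrtOneAdd_sub_one_le hK.le).trans_lt hK
  have hC2 : ‖C * C - 1‖ < 1 := by rwa [hCC]
  have hsector := abs_im_inner_le_re_inner (re_inner_apply_nonneg_of_norm_sub_one_le_one hC1.le)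
    (re_inner_apply_nonneg_of_norm_sub_one_le_one hC2.le)
  set s : ℝ := (√(2 * t))⁻¹
  have hs : 0 < s := by positivity
  refine ⟨(s * (1 + Complex.I) : ℂ) • C, ?_, fun z hz ↦ ?_, fun x hx ↦ ?_⟩
  · rw [smul_pow, sq C, hCC, smul_smul, smul_smul, inv_sqrt_two_mul_mul_one_add_I_sq ht,
      div_mul_cancel₀ _ (by exact_mod_cast ht.ne'), mul_neg, Complex.I_mul_I, neg_neg, one_smul]
  · -- `NormOneClass (H →L[ℂ] H)` fails for `H = 0`, where `‖1‖ = 0`.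
    rcases subsingleton_or_nontrivial H with hH | hH
    · simp [spectrum.of_subsingleton] at hz
    refine re_nonneg_and_im_nonneg_of_mem_spectrum_smul hs (fun w hw ↦ ?_) hz
    exact (abs_im_lt_re_of_mem_spectrum hC1 (by rwa [sq]) hw).le
  · refine (norm_exp_smul_le_of_re_inner_le _ (b := 0) (fun f ↦ ?_) hx).trans (by simp)
    rw [smul_apply, smul_apply, inner_smul_right, inner_smul_right, Complex.I_mul_re, zero_mul]
    exact neg_nonpos.2 (re_nonneg_and_im_nonneg_of_abs_im_le_re hs.le (hsector f)).2
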